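/- arXiv:1605.06759 — 2 statements merged into one kernel-verified Lean document; each statement's English description precedes it below -/
import Mathlib

section
/- Let G be a directed graph on a finite vertex set V and let A,B,C⊆V be pairwise disjoint. Then every b-pointing path in G from a vertex of A to a vertex of B is blocked by B∪C if and only if pa(B)∖(B∪C) and A are separated by B∪C in the moral graph (G_{an(A∪B∪C)∪A∪B∪C})^m of the subgraph of G induced on A∪B∪C together with its ancestors. -/
namespace HawkesPaper


variable {V : Type*}

/-- A path in a directed graph `E` between `a` and `b`: a sequence of `n ≥ 1` edges joining
vertices `a = a_0, a_1, …, a_n = b`, where the `i`-th edge is `a_i → a_{i+1}` if `dir i = true`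
and `a_i ← a_{i+1}` otherwise. -/
structure GWalk (E : V → V → Prop) (a b : V) where
  n : ℕ
  npos : 0 < n
  vert : ℕ → V
  dir : ℕ → Bool
  first : vert 0 = a
  last : vert n = b
  edges : ∀ i, i < n → if dir i then E (vert i) (vert (i + 1)) else E (vert (i + 1)) (vert i)

/-- A `b`-pointing path: the last edge points at `b`. -/
def GWalk.pointing {E : V → V → Prop} {a b : V} (w : GWalk E a b) : Prop :=
  w.dir (w.n - 1) = true

/-- The intermediate vertex at position `m` is a collider: the adjacent edges form
`a_{m−1} → a_m ← a_{m+1}`. -/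
def GWalk.colliderAt {E : V → V → Prop} {a b : V} (w : GWalk E a b) (m : ℕ) : Prop :=
  w.dir (m - 1) = true ∧ w.dir m = false

/-- A path is blocked by `C` iff some intermediate collider is not in `C`, or some
intermediate non-collider is in `C`. -/
def GWalk.blocked {E : V → V → Prop} {a b : V} (w : GWalk E a b) (C : Set V) : Prop :=
  ∃ m : ℕ, 0 < m ∧ m < w.n ∧
    ((w.colliderAt m ∧ w.vert m ∉ C) ∨ (¬ w.colliderAt m ∧ w.vert m ∈ C))

/-- Adjacency in the moral graph `G^m`: `i − j` iff `i` and `j` are joined by an edge of `G`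
or have a common child. -/
def moralAdj (E : V → V → Prop) (i j : V) : Prop :=
  E i j ∨ E j i ∨ ∃ k, E i k ∧ E j k

/-- Subgraph of `E` induced on `W`. -/
def inducedE (E : V → V → Prop) (W : Set V) (i j : V) : Prop :=
  i ∈ W ∧ j ∈ W ∧ E i j

/-- Set of ancestors `an(B)`: vertices having a directed path to some `b ∈ B`. -/
def ancSet (E : V → V → Prop) (B : Set V) : Set V :=
  {a | ∃ b ∈ B, Relation.TransGen E a b}

/-- Set of parents `pa(B)`. -/
def paSet (E : V → V → Prop) (B : Set V) : Set V :=
  {i | ∃ b ∈ B, E i b}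

/-- In an undirected graph `U`, `C` separates `A` and `B`: every path between a vertex of `A`
and a vertex of `B` contains a vertex of `C`. -/
def separates (U : V → V → Prop) (A B C : Set V) : Prop :=
  ∀ (n : ℕ) (v : ℕ → V), v 0 ∈ A → v n ∈ B → (∀ i, i < n → U (v i) (v (i + 1))) →
    ∃ m, m ≤ n ∧ v m ∈ C


lemma not_blocked_iff {E : V → V → Prop} {a b : V} {w : GWalk E a b} {D : Set V} :
    ¬ w.blocked D ↔ ∀ m, 0 < m → m < w.n →
      (w.colliderAt m → w.vert m ∈ D) ∧ (¬ w.colliderAt m → w.vert m ∉ D) := by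
  unfold GWalk.blocked
  push_neg
  constructor
  · intro h m h1 h2
    have := h m h1 h2
    tauto
  · intro h m h1 h2
    have := h m h1 h2
    tauto

/-- Prepend a segment `q 0, …, q s` (with its directions `dq`) to a walk `w` from `x = q s`
to `b`, preserving unblockedness. -/
lemma prepend_walk {E : V → V → Prop} {x b y : V} {D : Set V} (w : GWalk E x b)
    (hw : ¬ w.blocked D) (s : ℕ) (hs : 0 < s) (q : ℕ → V) (dq : ℕ → Bool)
    (hq0 : q 0 = y) (hqs : q s = x)
    (he : ∀ j < s, if dq j then E (q j) (q (j+1)) else E (q (j+1)) (q j))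
    (hseg : ∀ m, 0 < m → m < s →
      ((dq (m-1) = true ∧ dq m = false) → q m ∈ D) ∧
      (¬(dq (m-1) = true ∧ dq m = false) → q m ∉ D))
    (hjunc : ((dq (s-1) = true ∧ w.dir 0 = false) → x ∈ D) ∧
      (¬(dq (s-1) = true ∧ w.dir 0 = false) → x ∉ D)) :
    ∃ w' : GWalk E y b, ¬ w'.blocked D ∧ (w.pointing → w'.pointing) := by
  have hvert : ∀ m ≤ s, (if m < s then q m else w.vert (m - s)) = q m := by
    intro m hm
    by_cases h : m < s
    · simp [h]
    · have hms : m = s := by omega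
      simp [h, hms, w.first, hqs]
  refine ⟨⟨s + w.n, by have := w.npos; omega,
      fun m => if m < s then q m else w.vert (m - s),
      fun m => if m < s then dq m else w.dir (m - s), ?_, ?_, ?_⟩, ?_, ?_⟩
  · simp [hs, hq0]
  · have h : ¬ (s + w.n < s) := by omega
    simp [h, w.last]
  · intro m hm
    by_cases h1 : m < s
    · have hv1 : (if m < s then q m else w.vert (m - s)) = q m := hvert m (by omega)
      have hv2 : (if m + 1 < s then q (m+1) else w.vert (m + 1 - s)) = q (m+1) :=
        hvert (m+1) (by omega)
      simp only [hv1, hv2, if_pos h1]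
      exact he m h1
    · have h2 : ¬ (m + 1 < s) := by omega
      have h3 : m + 1 - s = (m - s) + 1 := by omega
      simp only [if_neg h1, if_neg h2, h3]
      exact w.edges (m - s) (by omega)
  · rw [not_blocked_iff]
    intro m h1 h2
    have h2' : m < s + w.n := h2
    simp only [GWalk.colliderAt]
    by_cases hc1 : m < s
    · have hd1 : (if m - 1 < s then dq (m-1) else w.dir (m - 1 - s)) = dq (m - 1) := by
        simp [show m - 1 < s by omega]
      have hd2 : (if m < s then dq m else w.dir (m - s)) = dq m := by simp [hc1]
      simp only [hd1, hd2, hvert m (by omega)]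
      exact hseg m h1 hc1
    · by_cases hc2 : m = s
      · subst hc2
        have hd1 : (if m - 1 < m then dq (m-1) else w.dir (m - 1 - m)) = dq (m - 1) := by
          simp [show m - 1 < m by omega]
        have hd2 : (if m < m then dq m else w.dir (m - m)) = w.dir 0 := by simp
        have hv : (if m < m then q m else w.vert (m - m)) = x := by
          simp [w.first]
        simp only [hd1, hd2, hv]
        exact hjunc
      · have hm1 : ¬ (m - 1 < s) := by omega
        have hm2 : ¬ (m < s) := by omega
        have hd3 : m - 1 - s = (m - s) - 1 := by omega
        simp only [if_neg hm1, if_neg hm2, hd3]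
        rw [not_blocked_iff] at hw
        exact hw (m - s) (by omega) (by omega)
  · intro hp
    unfold GWalk.pointing at hp ⊢
    have h : ¬ (s + w.n - 1 < s) := by have := w.npos; omega
    simp only [h, if_neg h]
    have : s + w.n - 1 - s = w.n - 1 := by omega
    rw [this]; exact hp


lemma transGen_toWalk {E : V → V → Prop} {a t : V} (h : Relation.TransGen E a t) :
    ∃ (s : ℕ) (q : ℕ → V), 0 < s ∧ q 0 = a ∧ q s = t ∧ ∀ j < s, E (q j) (q (j+1)) := by
  induction h with
  | @single c h =>
    exact ⟨1, fun j => if j = 0 then a else c, one_pos, by simp, by simp, by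
      intro j hj
      have : j = 0 := by omega
      simp [this, h]⟩
  | @tail b c _ e ih =>
    obtain ⟨s, q, hs, h0, hlast, hedge⟩ := ih
    refine ⟨s + 1, fun j => if j ≤ s then q j else c, by omega, by simp [h0], by simp, ?_⟩
    intro j hj
    by_cases hjs : j < s
    · have h1 : j ≤ s := by omega
      have h2 : j + 1 ≤ s := by omega
      simp only [if_pos h1, if_pos h2]
      exact hedge j hjs
    · have h1 : j = s := by omega
      subst h1
      simp [hlast, e]

/-- Escape lemma: from any vertex of `W := an(A∪B∪C) ∪ (A∪B∪C)` outside `B∪C` there is a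
directed walk reaching `B∪C` (all earlier vertices outside `B∪C`), or reaching `A` entirely
outside `B∪C`. -/
lemma escape {E : V → V → Prop} {A B C : Set V} {k : V}
    (hW : k ∈ ancSet E (A ∪ B ∪ C) ∪ (A ∪ B ∪ C)) (hk : k ∉ B ∪ C) :
    ∃ (s : ℕ) (q : ℕ → V), q 0 = k ∧ (∀ j < s, E (q j) (q (j+1))) ∧
      ((0 < s ∧ q s ∈ B ∪ C ∧ ∀ j < s, q j ∉ B ∪ C) ∨ (q s ∈ A ∧ ∀ j ≤ s, q j ∉ B ∪ C)) := by
  classical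
  have key : ∀ (s : ℕ) (q : ℕ → V), q 0 = k → (∀ j < s, E (q j) (q (j+1))) →
      q s ∈ A ∪ B ∪ C →
      ∃ (s' : ℕ) (q' : ℕ → V), q' 0 = k ∧ (∀ j < s', E (q' j) (q' (j+1))) ∧
        ((0 < s' ∧ q' s' ∈ B ∪ C ∧ ∀ j < s', q' j ∉ B ∪ C) ∨
          (q' s' ∈ A ∧ ∀ j ≤ s', q' j ∉ B ∪ C)) := by
    intro s q h0 hedge hlast
    by_cases hex : ∃ j, j ≤ s ∧ q j ∈ B ∪ C
    · set m := Nat.find hex with hm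
      obtain ⟨hms, hmBC⟩ := Nat.find_spec hex
      have hmin : ∀ j < m, ¬(j ≤ s ∧ q j ∈ B ∪ C) := fun j hj => Nat.find_min hex hj
      refine ⟨m, q, h0, fun j hj => hedge j (by omega), Or.inl ⟨?_, hmBC, ?_⟩⟩
      · rcases Nat.eq_zero_or_pos m with h | h
        · exact absurd (h ▸ hmBC) (h0 ▸ hk)
        · exact h
      · intro j hj
        intro hjBC
        exact hmin j hj ⟨by omega, hjBC⟩
    · push_neg at hex
      have hA : q s ∈ A := by
        rcases hlast with (h | h) | h
        · exact h
        · exact absurd (Or.inl h) (hex s le_rfl)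
        · exact absurd (Or.inr h) (hex s le_rfl)
      exact ⟨s, q, h0, hedge, Or.inr ⟨hA, hex⟩⟩
  rcases hW with h | h
  · obtain ⟨t, ht, htr⟩ := h
    obtain ⟨s, q, _, h0, hlast, hedge⟩ := transGen_toWalk htr
    exact key s q h0 hedge (hlast ▸ ht)
  · exact key 0 (fun _ => k) rfl (by omega) h

/-- All vertices of an unblocked pointing walk from `A` to `B` lie in
`W = an(A∪B∪C) ∪ (A∪B∪C)`. -/
lemma walk_mem_W {E : V → V → Prop} {A B C : Set V} {a b : V}
    (ha : a ∈ A) (hb : b ∈ B) (w : GWalk E a b)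
    (hnb : ¬ w.blocked (B ∪ C)) :
    ∀ i ≤ w.n, w.vert i ∈ ancSet E (A ∪ B ∪ C) ∪ (A ∪ B ∪ C) := by
  classical
  rw [not_blocked_iff] at hnb
  -- (1) forward-directed vertices are ancestors
  have L : ∀ (d i : ℕ), w.n - i ≤ d → i < w.n → w.dir i = true →
      w.vert i ∈ ancSet E (A ∪ B ∪ C) := by
    intro d
    induction d with
    | zero => intro i h hi; omega
    | succ d ih =>
      intro i h hi hd
      have hedge : E (w.vert i) (w.vert (i+1)) := by
        have := w.edges i hi
        rwa [if_pos hd] at this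
      by_cases hlast : i + 1 = w.n
      · exact ⟨b, by simp [hb], Relation.TransGen.single (by rwa [hlast, w.last] at hedge)⟩
      · by_cases hmem : w.vert (i+1) ∈ B ∪ C
        · refine ⟨w.vert (i+1), ?_, Relation.TransGen.single hedge⟩
          rcases hmem with h' | h'
          · exact Or.inl (Or.inr h')
          · exact Or.inr h'
        · have hnc : ¬ w.colliderAt (i+1) := by
            intro hc
            exact hmem ((hnb (i+1) (by omega) (by omega)).1 hc)
          have hd1 : w.dir (i+1) = true := by
            by_contra h'
            exact hnc ⟨by simpa using hd, by simpa using h'⟩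
          obtain ⟨t, ht, htr⟩ := ih (i+1) (by omega) (by omega) hd1
          exact ⟨t, ht, Relation.TransGen.head hedge htr⟩
  -- (2) backward-directed vertices are ancestors
  have L' : ∀ (d i : ℕ), i ≤ d → i < w.n → w.dir i = false →
      w.vert (i+1) ∈ ancSet E (A ∪ B ∪ C) := by
    intro d
    induction d with
    | zero =>
      intro i h hi hd
      have h0 : i = 0 := by omega
      subst h0
      have hedge : E (w.vert 1) (w.vert 0) := by
        have := w.edges 0 hi
        rwa [if_neg (by simp [hd])] at this
      exact ⟨a, by simp [ha], Relation.TransGen.single (by rwa [w.first] at hedge)⟩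
    | succ d ih =>
      intro i h hi hd
      have hedge : E (w.vert (i+1)) (w.vert i) := by
        have := w.edges i hi
        rwa [if_neg (by simp [hd])] at this
      rcases Nat.eq_zero_or_pos i with h0 | h0
      · subst h0
        exact ⟨a, by simp [ha], Relation.TransGen.single (by rwa [w.first] at hedge)⟩
      · by_cases hmem : w.vert i ∈ B ∪ C
        · refine ⟨w.vert i, ?_, Relation.TransGen.single hedge⟩
          rcases hmem with h' | h'
          · exact Or.inl (Or.inr h')
          · exact Or.inr h'
        · have hnc : ¬ w.colliderAt i := by
            intro hc
            exact hmem ((hnb i h0 hi).1 hc)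
          have hd1 : w.dir (i-1) = false := by
            by_contra h'
            exact hnc ⟨by simpa using h', hd⟩
          obtain ⟨t, ht, htr⟩ := ih (i-1) (by omega) (by omega) hd1
          have hi1 : i - 1 + 1 = i := by omega
          rw [hi1] at htr
          exact ⟨t, ht, Relation.TransGen.head hedge htr⟩
  intro i hi
  rcases Nat.eq_zero_or_pos i with h0 | h0
  · subst h0; rw [w.first]; exact Or.inr (Or.inl (Or.inl ha))
  by_cases hn : i = w.n
  · subst hn; rw [w.last]; exact Or.inr (Or.inl (Or.inr hb))
  have hin : i < w.n := by omega
  cases hdi : w.dir i with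
  | true => exact Or.inl (L (w.n - i) i le_rfl hin hdi)
  | false =>
    cases hdi1 : w.dir (i-1) with
    | false =>
      have := L' (i-1) (i-1) le_rfl (by omega) hdi1
      rw [show i - 1 + 1 = i by omega] at this
      exact Or.inl this
    | true =>
      have hc : w.colliderAt i := ⟨hdi1, hdi⟩
      have := (hnb i h0 hin).1 hc
      rcases this with h' | h'
      · exact Or.inr (Or.inl (Or.inr h'))
      · exact Or.inr (Or.inr h')


lemma moral_symm {U : V → V → Prop} {x y : V} (h : moralAdj U x y) : moralAdj U y x := by
  unfold moralAdj at *; tauto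

/-- Backward direction: separation in the moral graph implies every pointing path is
blocked. -/
lemma backward_dir {E : V → V → Prop} {A B C : Set V}
    (hAB : Disjoint A B) (hAC : Disjoint A C)
    (hsep : separates (moralAdj (inducedE E (ancSet E (A ∪ B ∪ C) ∪ (A ∪ B ∪ C))))
      (paSet E B \ (B ∪ C)) A (B ∪ C)) :
    ∀ a ∈ A, ∀ b ∈ B, ∀ w : GWalk E a b, w.pointing → w.blocked (B ∪ C) := by
  classical
  intro a ha b hb w hp
  by_contra hnb
  set W := ancSet E (A ∪ B ∪ C) ∪ (A ∪ B ∪ C) with hW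
  have hmem := walk_mem_W ha hb w hnb
  have haBC : a ∉ B ∪ C := by
    intro h
    rcases h with h | h
    · exact Set.disjoint_left.mp hAB ha h
    · exact Set.disjoint_left.mp hAC ha h
  have hnb' := not_blocked_iff.mp hnb
  -- extension step: prepend one moral edge to a moral path ending at `a`
  have extend : ∀ (y x : V), x ∉ B ∪ C → moralAdj (inducedE E W) x y →
      (∃ (N : ℕ) (u : ℕ → V), u 0 = y ∧ u N = a ∧
        (∀ k < N, moralAdj (inducedE E W) (u k) (u (k+1))) ∧ (∀ k ≤ N, u k ∉ B ∪ C)) →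
      (∃ (N : ℕ) (u : ℕ → V), u 0 = x ∧ u N = a ∧
        (∀ k < N, moralAdj (inducedE E W) (u k) (u (k+1))) ∧ (∀ k ≤ N, u k ∉ B ∪ C)) := by
    rintro y x hx hadj ⟨N, u, h0, hN, hedges, hout⟩
    refine ⟨N + 1, fun k => if k = 0 then x else u (k - 1), by simp, by simp [hN], ?_, ?_⟩
    · intro k hk
      rcases Nat.eq_zero_or_pos k with h | h
      · subst h
        simpa [h0] using hadj
      · have h1 : ¬ (k = 0) := by omega
        have h2 : ¬ (k + 1 = 0) := by omega
        have h3 : k + 1 - 1 = (k - 1) + 1 := by omega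
        simp only [if_neg h1, if_neg h2, h3]
        exact hedges (k - 1) (by omega)
    · intro k hk
      rcases Nat.eq_zero_or_pos k with h | h
      · subst h; simpa using hx
      · simp only [if_neg (by omega : ¬ (k = 0))]
        exact hout (k - 1) (by omega)
  -- main claim: from any non-collider position there is a moral path to `a` avoiding B∪C
  have claim : ∀ (d i : ℕ), i ≤ d → i < w.n → (i = 0 ∨ (0 < i ∧ ¬ w.colliderAt i)) →
      ∃ (N : ℕ) (u : ℕ → V), u 0 = w.vert i ∧ u N = a ∧
        (∀ k < N, moralAdj (inducedE E W) (u k) (u (k+1))) ∧ (∀ k ≤ N, u k ∉ B ∪ C) := by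
    intro d
    induction d with
    | zero =>
      intro i hi _ _
      have h0 : i = 0 := by omega
      subst h0
      exact ⟨0, fun _ => a, by simp [w.first], rfl, fun k hk => by omega,
        fun k hk => haBC⟩
    | succ d ih =>
      intro i hi hin hpre
      rcases hpre with h0 | ⟨hi0, hnc⟩
      · subst h0
        exact ⟨0, fun _ => a, by simp [w.first], rfl, fun k hk => by omega,
          fun k hk => haBC⟩
      have hxBC : w.vert i ∉ B ∪ C := (hnb' i hi0 hin).2 hnc
      by_cases hcol : 2 ≤ i ∧ w.colliderAt (i-1)
      · -- skip the collider at i-1, jump to i-2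
        have hi2 : 2 ≤ i := hcol.1
        have hc1 : w.dir (i - 1 - 1) = true := hcol.2.1
        have hc2 : w.dir (i - 1) = false := hcol.2.2
        have e1 : E (w.vert (i-2)) (w.vert (i-1)) := by
          have := w.edges (i-2) (by omega)
          rw [show (i:ℕ) - 2 + 1 = i - 1 by omega] at this
          rwa [if_pos (by rwa [show (i:ℕ)-1-1 = i-2 by omega] at hc1)] at this
        have e2 : E (w.vert i) (w.vert (i-1)) := by
          have := w.edges (i-1) (by omega)
          rw [show (i:ℕ) - 1 + 1 = i by omega] at this
          rwa [if_neg (by simp [hc2])] at this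
        have hadj : moralAdj (inducedE E W) (w.vert i) (w.vert (i-2)) :=
          Or.inr (Or.inr ⟨w.vert (i-1),
            ⟨hmem i (by omega), hmem (i-1) (by omega), e2⟩,
            ⟨hmem (i-2) (by omega), hmem (i-1) (by omega), e1⟩⟩)
        have hpre2 : i - 2 = 0 ∨ (0 < i - 2 ∧ ¬ w.colliderAt (i-2)) := by
          rcases Nat.eq_zero_or_pos (i - 2) with h | h
          · exact Or.inl h
          · refine Or.inr ⟨h, fun hc => ?_⟩
            have := hc.2
            rw [show (i:ℕ)-1-1 = i-2 by omega] at hc1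
            rw [hc1] at this
            exact absurd this (by simp)
        exact extend _ _ hxBC hadj (ih (i-2) (by omega) (by omega) hpre2)
      · -- move to i-1 along a real edge
        have hpre1 : i - 1 = 0 ∨ (0 < i - 1 ∧ ¬ w.colliderAt (i-1)) := by
          rcases Nat.eq_zero_or_pos (i - 1) with h | h
          · exact Or.inl h
          · exact Or.inr ⟨h, fun hc => hcol ⟨by omega, hc⟩⟩
        have hadj : moralAdj (inducedE E W) (w.vert i) (w.vert (i-1)) := by
          have hedge := w.edges (i-1) (by omega)
          rw [show (i:ℕ) - 1 + 1 = i by omega] at hedge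
          cases hd : w.dir (i-1) with
          | true =>
            rw [if_pos hd] at hedge
            exact Or.inr (Or.inl ⟨hmem (i-1) (by omega), hmem i (by omega), hedge⟩)
          | false =>
            rw [if_neg (by simp [hd])] at hedge
            exact Or.inl ⟨hmem i (by omega), hmem (i-1) (by omega), hedge⟩
        exact extend _ _ hxBC hadj (ih (i-1) (by omega) (by omega) hpre1)
  -- apply the claim at position n-1
  have hpre : w.n - 1 = 0 ∨ (0 < w.n - 1 ∧ ¬ w.colliderAt (w.n - 1)) := by
    rcases Nat.eq_zero_or_pos (w.n - 1) with h | h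
    · exact Or.inl h
    · refine Or.inr ⟨h, fun hc => ?_⟩
      have := hc.2
      rw [hp] at this
      exact absurd this (by simp)
  obtain ⟨N, u, h0, hN, hedges, hout⟩ := claim (w.n - 1) (w.n - 1) le_rfl
    (by have := w.npos; omega) hpre
  have hstart : u 0 ∈ paSet E B \ (B ∪ C) := by
    refine ⟨⟨b, hb, ?_⟩, hout 0 (by omega)⟩
    have hp' : w.dir (w.n - 1) = true := hp
    have hedge := w.edges (w.n - 1) (by have := w.npos; omega)
    rw [if_pos hp', show w.n - 1 + 1 = w.n by have := w.npos; omega, w.last] at hedge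
    rwa [h0]
  obtain ⟨m, hm, hmBC⟩ := hsep N u hstart (hN ▸ ha) hedges
  exact hout m hm hmBC


/-- Forward direction: if every pointing path is blocked, then we have separation in the
moral graph. -/
lemma forward_dir {E : V → V → Prop} {A B C : Set V}
    (H : ∀ a ∈ A, ∀ b ∈ B, ∀ w : GWalk E a b, w.pointing → w.blocked (B ∪ C)) :
    separates (moralAdj (inducedE E (ancSet E (A ∪ B ∪ C) ∪ (A ∪ B ∪ C))))
      (paSet E B \ (B ∪ C)) A (B ∪ C) := by
  classical
  set W := ancSet E (A ∪ B ∪ C) ∪ (A ∪ B ∪ C) with hWdef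
  intro n u h0 hn hedges
  by_contra hcon
  push_neg at hcon
  have hout : ∀ m ≤ n, u m ∉ B ∪ C := fun m hm => hcon m hm
  have Q : ∀ i, i ≤ n → ∃ b ∈ B, ∃ w : GWalk E (u i) b, w.pointing ∧ ¬ w.blocked (B ∪ C) := by
    intro i
    induction i with
    | zero =>
      intro _
      obtain ⟨bb, hbb, he⟩ := h0.1
      refine ⟨bb, hbb, ⟨1, one_pos, fun m => if m = 0 then u 0 else bb, fun _ => true,
        by simp, by simp, ?_⟩, rfl, ?_⟩
      · intro j hj
        have hj0 : j = 0 := by omega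
        subst hj0
        simpa using he
      · rintro ⟨m, h1, h2, _⟩
        have : m < 1 := h2
        omega
    | succ i ih =>
      intro hle
      obtain ⟨b, hb, w, hpw, hnbw⟩ := ih (by omega)
      have hadj := hedges i (by omega)
      have hxout : u i ∉ B ∪ C := hout i (by omega)
      have hyout : u (i+1) ∉ B ∪ C := hout (i+1) hle
      rcases hadj with hcase | hcase | ⟨k, hk1, hk2⟩
      · -- edge u i → u (i+1) : prepend a single backward edge
        obtain ⟨-, -, hexy⟩ := hcase
        obtain ⟨w', hnb', hpp⟩ := prepend_walk (y := u (i+1)) w hnbw 1 one_pos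
          (fun j => if j = 0 then u (i+1) else u i) (fun _ => false)
          (by simp) (by simp)
          (by
            intro j hj
            have hj0 : j = 0 := by omega
            subst hj0
            simpa using hexy)
          (by intro m h1 h2; omega)
          ⟨fun h => absurd h.1 (by simp), fun _ => hxout⟩
        exact ⟨b, hb, w', hpp hpw, hnb'⟩
      · -- edge u (i+1) → u i
        obtain ⟨-, hxW, hexy⟩ := hcase
        cases hd : w.dir 0 with
        | true =>
          obtain ⟨w', hnb', hpp⟩ := prepend_walk (y := u (i+1)) w hnbw 1 one_pos
            (fun j => if j = 0 then u (i+1) else u i) (fun _ => true)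
            (by simp) (by simp)
            (by
              intro j hj
              have hj0 : j = 0 := by omega
              subst hj0
              simpa using hexy)
            (by intro m h1 h2; omega)
            ⟨fun h => by rw [hd] at h; exact absurd h.2 (by simp), fun _ => hxout⟩
          exact ⟨b, hb, w', hpp hpw, hnb'⟩
        | false =>
          -- would create a collider at u i : detour through a descendant
          obtain ⟨s', Qf, hQ0, hQe, hcase2⟩ := escape (A := A) hxW hxout
          rcases hcase2 with ⟨hs'pos, hQend, hQout⟩ | ⟨hQA, hQout2⟩
          · -- detour through a collider in B ∪ C
            set q : ℕ → V := fun j => if j = 0 then u (i+1) else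
              if j ≤ s'+1 then Qf (j-1) else Qf (2*s'+1-j) with hqdef
            have hqA : ∀ j, 1 ≤ j → j ≤ s'+1 → q j = Qf (j-1) := by
              intro j hj1 hj2
              simp only [hqdef, if_neg (by omega : ¬ j = 0), if_pos hj2]
            have hqB : ∀ j, s'+1 ≤ j → j ≤ 2*s'+1 → q j = Qf (2*s'+1-j) := by
              intro j hj1 hj2
              by_cases hj : j = s'+1
              · subst hj
                rw [hqA (s'+1) (by omega) le_rfl,
                  show s'+1-1 = s' by omega, show 2*s'+1-(s'+1) = s' by omega]
              · simp only [hqdef, if_neg (by omega : ¬ j = 0),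
                  if_neg (by omega : ¬ j ≤ s'+1)]
            obtain ⟨w', hnb', hpp⟩ := prepend_walk (y := u (i+1)) w hnbw (2*s'+1) (by omega)
              q (fun j => decide (j ≤ s')) (by simp [hqdef])
              (by rw [hqB (2*s'+1) (by omega) le_rfl, show 2*s'+1-(2*s'+1) = 0 by omega, hQ0])
              (by
                intro j hj
                by_cases hds : j ≤ s'
                · rw [if_pos (by simpa using hds)]
                  rcases Nat.eq_zero_or_pos j with hj0 | hj0
                  · subst hj0
                    rw [show q 0 = u (i+1) by simp [hqdef], hqA 1 le_rfl (by omega),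
                      show (1:ℕ)-1 = 0 by omega, hQ0]
                    exact hexy
                  · rw [hqA j (by omega) (by omega), hqA (j+1) (by omega) (by omega),
                      show j+1-1 = j by omega]
                    have := hQe (j-1) (by omega)
                    rwa [show j-1+1 = j by omega] at this
                · rw [if_neg (by simpa using hds)]
                  rw [hqB j (by omega) (by omega), hqB (j+1) (by omega) (by omega)]
                  have := hQe (2*s'+1-(j+1)) (by omega)
                  rwa [show 2*s'+1-(j+1)+1 = 2*s'+1-j by omega] at this)
              (by
                intro m h1 h2
                by_cases hm1 : m ≤ s'
                · refine ⟨fun h => absurd h.2 (by simpa using hm1), fun _ => ?_⟩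
                  rw [hqA m (by omega) (by omega)]
                  exact hQout (m-1) (by omega)
                · by_cases hm2 : m = s'+1
                  · refine ⟨fun _ => ?_, fun hnc => absurd ⟨?_, ?_⟩ hnc⟩
                    · rw [hqA m (by omega) (by omega), hm2, show s'+1-1 = s' by omega]
                      exact hQend
                    · simpa using (by omega : m - 1 ≤ s')
                    · simpa using hm1
                  · refine ⟨fun h => ?_, fun _ => ?_⟩
                    · have := h.1
                      simp only [decide_eq_true_eq] at this
                      omega
                    · rw [hqB m (by omega) (by omega)]
                      exact hQout (2*s'+1-m) (by omega))
              (by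
                refine ⟨fun h => ?_, fun _ => hxout⟩
                have := h.1
                simp only [decide_eq_true_eq] at this
                omega)
            exact ⟨b, hb, w', hpp hpw, hnb'⟩
          · -- the detour reaches A : contradiction with the blocking hypothesis
            rcases Nat.eq_zero_or_pos s' with hs0 | hs0
            · subst hs0
              have : u i ∈ A := hQ0 ▸ hQA
              exact absurd (H (u i) this b hb w hpw) hnbw
            · obtain ⟨w', hnb', hpp⟩ := prepend_walk (y := Qf s') w hnbw s' hs0
                (fun j => Qf (s'-j)) (fun _ => false)
                (by simp) (by simp [hQ0])
                (by
                  intro j hj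
                  rw [if_neg (by simp)]
                  show E (Qf (s'-(j+1))) (Qf (s'-j))
                  have := hQe (s'-j-1) (by omega)
                  rwa [show s'-j-1+1 = s'-j by omega, show s'-j-1 = s'-(j+1) by omega] at this)
                (by
                  intro m h1 h2
                  exact ⟨fun h => absurd h.1 (by simp), fun _ => hQout2 (s'-m) (by omega)⟩)
                ⟨fun h => absurd h.1 (by simp), fun _ => hxout⟩
              exact absurd (H (Qf s') hQA b hb w' (hpp hpw)) hnb'
      · -- common child k
        obtain ⟨-, hkW, hexk⟩ := hk1
        obtain ⟨-, -, heyk⟩ := hk2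
        by_cases hkBC : k ∈ B ∪ C
        · -- insert k as a collider
          obtain ⟨w', hnb', hpp⟩ := prepend_walk (y := u (i+1)) w hnbw 2 (by omega)
            (fun j => if j = 0 then u (i+1) else if j = 1 then k else u i)
            (fun j => decide (j = 0)) (by simp) (by simp)
            (by
              intro j hj
              interval_cases j
              · simpa using heyk
              · rw [if_neg (by simp)]
                simpa using hexk)
            (by
              intro m h1 h2
              have hm1 : m = 1 := by omega
              subst hm1
              exact ⟨fun _ => by simpa using hkBC, fun hnc => absurd ⟨by simp, by simp⟩ hnc⟩)
            (by
              refine ⟨fun h => ?_, fun _ => hxout⟩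
              have := h.1
              simp at this)
          exact ⟨b, hb, w', hpp hpw, hnb'⟩
        · -- k outside B ∪ C : detour from k
          obtain ⟨s', Qf, hQ0, hQe, hcase2⟩ := escape (A := A) hkW hkBC
          rcases hcase2 with ⟨hs'pos, hQend, hQout⟩ | ⟨hQA, hQout2⟩
          · set q : ℕ → V := fun j => if j = 0 then u (i+1) else
              if j ≤ s'+1 then Qf (j-1) else if j ≤ 2*s'+1 then Qf (2*s'+1-j) else u i
              with hqdef
            have hqA : ∀ j, 1 ≤ j → j ≤ s'+1 → q j = Qf (j-1) := by
              intro j hj1 hj2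
              simp only [hqdef, if_neg (by omega : ¬ j = 0), if_pos hj2]
            have hqB : ∀ j, s'+1 ≤ j → j ≤ 2*s'+1 → q j = Qf (2*s'+1-j) := by
              intro j hj1 hj2
              by_cases hj : j = s'+1
              · subst hj
                rw [hqA (s'+1) (by omega) le_rfl,
                  show s'+1-1 = s' by omega, show 2*s'+1-(s'+1) = s' by omega]
              · simp only [hqdef, if_neg (by omega : ¬ j = 0),
                  if_neg (by omega : ¬ j ≤ s'+1), if_pos hj2]
            obtain ⟨w', hnb', hpp⟩ := prepend_walk (y := u (i+1)) w hnbw (2*s'+2) (by omega)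
              q (fun j => decide (j ≤ s')) (by simp [hqdef])
              (by
                simp only [hqdef, if_neg (by omega : ¬ 2*s'+2 = 0),
                  if_neg (by omega : ¬ 2*s'+2 ≤ s'+1), if_neg (by omega : ¬ 2*s'+2 ≤ 2*s'+1)])
              (by
                intro j hj
                by_cases hds : j ≤ s'
                · rw [if_pos (by simpa using hds)]
                  rcases Nat.eq_zero_or_pos j with hj0 | hj0
                  · subst hj0
                    rw [show q 0 = u (i+1) by simp [hqdef], hqA 1 le_rfl (by omega),
                      show (1:ℕ)-1 = 0 by omega, hQ0]
                    exact heyk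
                  · rw [hqA j (by omega) (by omega), hqA (j+1) (by omega) (by omega),
                      show j+1-1 = j by omega]
                    have := hQe (j-1) (by omega)
                    rwa [show j-1+1 = j by omega] at this
                · rw [if_neg (by simpa using hds)]
                  by_cases hj2 : j = 2*s'+1
                  · subst hj2
                    rw [hqB (2*s'+1) (by omega) le_rfl, show 2*s'+1-(2*s'+1) = 0 by omega,
                      hQ0, show (2*s'+1)+1 = 2*s'+2 by omega]
                    have : q (2*s'+2) = u i := by
                      simp only [hqdef, if_neg (by omega : ¬ 2*s'+2 = 0),
                        if_neg (by omega : ¬ 2*s'+2 ≤ s'+1),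
                        if_neg (by omega : ¬ 2*s'+2 ≤ 2*s'+1)]
                    rw [this]
                    exact hexk
                  · rw [hqB j (by omega) (by omega), hqB (j+1) (by omega) (by omega)]
                    have := hQe (2*s'+1-(j+1)) (by omega)
                    rwa [show 2*s'+1-(j+1)+1 = 2*s'+1-j by omega] at this)
              (by
                intro m h1 h2
                by_cases hm1 : m ≤ s'
                · refine ⟨fun h => absurd h.2 (by simpa using hm1), fun _ => ?_⟩
                  rw [hqA m (by omega) (by omega)]
                  exact hQout (m-1) (by omega)
                · by_cases hm2 : m = s'+1
                  · refine ⟨fun _ => ?_, fun hnc => absurd ⟨?_, ?_⟩ hnc⟩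
                    · rw [hqA m (by omega) (by omega), hm2, show s'+1-1 = s' by omega]
                      exact hQend
                    · simpa using (by omega : m - 1 ≤ s')
                    · simpa using hm1
                  · refine ⟨fun h => ?_, fun _ => ?_⟩
                    · have := h.1
                      simp only [decide_eq_true_eq] at this
                      omega
                    · rw [hqB m (by omega) (by omega)]
                      rcases Nat.eq_zero_or_pos (2*s'+1-m) with hz | hz
                      · rw [hz, hQ0]; exact hkBC
                      · exact hQout (2*s'+1-m) (by omega))
              (by
                refine ⟨fun h => ?_, fun _ => hxout⟩
                have := h.1
                simp only [decide_eq_true_eq] at this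
                omega)
            exact ⟨b, hb, w', hpp hpw, hnb'⟩
          · -- detour reaches A : contradiction
            obtain ⟨w', hnb', hpp⟩ := prepend_walk (y := Qf s') w hnbw (s'+1) (by omega)
              (fun j => if j ≤ s' then Qf (s'-j) else u i) (fun _ => false)
              (by simp) (by simp)
              (by
                intro j hj
                rw [if_neg (by simp)]
                beta_reduce
                by_cases hjs : j < s'
                · rw [if_pos (by omega : j ≤ s'), if_pos (by omega : j+1 ≤ s')]
                  show E (Qf (s'-(j+1))) (Qf (s'-j))
                  have := hQe (s'-j-1) (by omega)
                  rwa [show s'-j-1+1 = s'-j by omega, show s'-j-1 = s'-(j+1) by omega] at this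
                · have hjs2 : j = s' := by omega
                  subst hjs2
                  rw [if_pos le_rfl, if_neg (by omega : ¬ j+1 ≤ j), show j-j = 0 by omega, hQ0]
                  exact hexk)
              (by
                intro m h1 h2
                refine ⟨fun h => absurd h.1 (by simp), fun _ => ?_⟩
                show (if m ≤ s' then Qf (s'-m) else u i) ∉ B ∪ C
                rw [if_pos (by omega : m ≤ s')]
                exact hQout2 (s'-m) (by omega))
              ⟨fun h => absurd h.1 (by simp), fun _ => hxout⟩
            exact absurd (H (Qf s') hQA b hb w' (hpp hpw)) hnb'
  obtain ⟨b, hb, w, hpw, hnbw⟩ := Q n le_rfl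
  exact hnbw (H (u n) hn b hb w hpw)


/-- Let `G` be a directed graph on a finite vertex set `V` and let
`A, B, C ⊆ V` be pairwise disjoint. Then every `b`-pointing path in `G` from a vertex of `A`
to a vertex of `B` is blocked by `B ∪ C` if and only if `pa(B) ∖ (B ∪ C)` and `A` are
separated by `B ∪ C` in the moral graph `(G_{an(A∪B∪C)∪(A∪B∪C)})^m` of the subgraph of `G`
induced on `A ∪ B ∪ C` together with its ancestors. -/
theorem pointing_paths_blocked_iff_moral_separation
    {V : Type*} [Fintype V] (E : V → V → Prop) (A B C : Set V)
    (hAB : Disjoint A B) (hAC : Disjoint A C) (hBC : Disjoint B C) :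
    (∀ a ∈ A, ∀ b ∈ B, ∀ w : GWalk E a b, w.pointing → w.blocked (B ∪ C)) ↔
      separates
        (moralAdj (inducedE E (ancSet E (A ∪ B ∪ C) ∪ (A ∪ B ∪ C))))
        (paSet E B \ (B ∪ C)) A (B ∪ C) := by
  constructor
  · exact fun H => forward_dir H
  · exact fun hsep => backward_dir hAB hAC hsep

end HawkesPaper
end

section
/- Let q:ℝ→ℂ^{d×d} be a continuous integrable matrix-valued function whose Fourier transform q̂(ω)=∫_ℝ q(t)e^{−iωt}dt is integrable, so that q(t)=(1/2π)∫_ℝ q̂(ω)e^{iωt}dω for all t. Let H₁(ω)=∫_0^1 e^{−iωt}dt. Then for every h>0 and every u∈ℤ: ∫_0^h∫_0^h q(uh+t−s)dt ds = (h/2π)∫_{−π}^{π}(∑_{n∈ℤ} H₁(−ω−2πn)·q̂((ω+2πn)/h)·H₁(ω+2πn))·e^{iωu} dω, where the series converges absolutely for almost every ω∈[−π,π]. -/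
/-!
Insert the inversion formula `q(τ) = (1/2π) ∫ q̂(ω) e^{iωτ} dω` into the double integral. After the
substitution `t ↦ ht`, `s ↦ hs`, `ω ↦ x/h`, the integrals over `t` and `s` can be moved inside
(Fubini: the exponential kernel has modulus one and `q̂` is integrable) and produce the factors
`H₁(−x)` and `H₁(x)`, giving `(h/2π) ∫_ℝ H₁(−x) q̂(x/h) H₁(x) e^{ixu} dx`. Cutting `ℝ` into the
translates of the fundamental domain `(−π, π]` of `2πℤ` and using that `e^{ixu}` is `2π`-periodic
for integer `u` folds this integral onto `[−π, π]`; applied to `‖·‖`, the same decomposition shows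
that the folded series converges absolutely almost everywhere.
-/

open MeasureTheory Real Set
open scoped ENNReal

namespace HawkesPaper

/-- `H₁(ω) = ∫_0^1 e^{−iωt} dt`, the Fourier transform of the indicator of `[0,1]`. -/
noncomputable def H1fun (ω : ℝ) : ℂ :=
  ∫ t in (0 : ℝ)..1, Complex.exp (-Complex.I * ω * t)

section Folding

variable {E : Type*} [NormedAddCommGroup E] {T : ℝ}

theorem tsum_zmultiples_eq_tsum_int {α : Type*} [AddCommMonoid α] [TopologicalSpace α]
    (hT : T ≠ 0) (F : ℝ → α) :
    ∑' g : AddSubgroup.zmultiples T, F g = ∑' n : ℤ, F (T * n) := by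
  have hbij : Function.Bijective
      (fun n : ℤ => (⟨n • T, n, rfl⟩ : AddSubgroup.zmultiples T)) :=
    ⟨fun m n hmn => smul_left_injective ℤ hT (congrArg Subtype.val hmn),
      fun ⟨_, n, hn⟩ => ⟨n, Subtype.ext hn⟩⟩
  rw [← (Equiv.ofBijective _ hbij).tsum_eq]
  simp [zsmul_eq_mul, mul_comm]

theorem lintegral_eq_tsum_setLIntegral_Ioc_add (hT : 0 < T) (a : ℝ) (f : ℝ → ℝ≥0∞) :
    ∫⁻ x, f x = ∑' n : ℤ, ∫⁻ x in Ioc a (a + T), f (x + T * n) := by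
  rw [(isAddFundamentalDomain_Ioc hT a volume).lintegral_eq_tsum'',
    ← tsum_zmultiples_eq_tsum_int hT.ne' fun g => ∫⁻ x in Ioc a (a + T), f (x + g)]
  simp only [AddSubgroup.vadd_def, vadd_eq_add, add_comm]

theorem integral_eq_tsum_setIntegral_Ioc_add [NormedSpace ℝ E] {f : ℝ → E} (hf : Integrable f)
    (hT : 0 < T) (a : ℝ) :
    ∫ x, f x = ∑' n : ℤ, ∫ x in Ioc a (a + T), f (x + T * n) := by
  rw [(isAddFundamentalDomain_Ioc hT a volume).integral_eq_tsum'' f hf,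
    ← tsum_zmultiples_eq_tsum_int hT.ne' fun g => ∫ x in Ioc a (a + T), f (x + g)]
  simp only [AddSubgroup.vadd_def, vadd_eq_add, add_comm]

theorem ae_summable_norm_comp_add_mul {f : ℝ → E} (hf : Integrable f) (hT : 0 < T) (a : ℝ) :
    ∀ᵐ x ∂volume.restrict (Ioc a (a + T)), Summable fun n : ℤ => ‖f (x + T * n)‖ := by
  refine summable_norm_of_tsum_eLpNorm_ne_top le_rfl
    (fun n => (hf.comp_add_right _).1.restrict) ?_
  simp_rw [eLpNorm_one_eq_lintegral_enorm]
  rw [← lintegral_eq_tsum_setLIntegral_Ioc_add hT a (‖f ·‖ₑ)]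
  exact hf.2.ne

theorem integral_eq_setIntegral_Ioc_tsum_comp_add_mul [NormedSpace ℝ E] {f : ℝ → E}
    (hf : Integrable f) (hT : 0 < T) (a : ℝ) :
    ∫ x, f x = ∫ x in Ioc a (a + T), ∑' n : ℤ, f (x + T * n) := by
  rw [integral_eq_tsum_setIntegral_Ioc_add hf hT a, integral_tsum]
  · exact fun n => (hf.comp_add_right _).1.restrict
  · rw [← lintegral_eq_tsum_setLIntegral_Ioc_add hT a (‖f ·‖ₑ)]
    exact hf.2.ne

theorem integral_mul_periodic_eq_intervalIntegral_tsum_mul {𝕜 : Type*} [NormedField 𝕜]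
    [NormedSpace ℝ 𝕜] {F e : ℝ → 𝕜} (hFe : Integrable fun x => F x * e x)
    (he : Function.Periodic e T) (hT : 0 < T) (a : ℝ) :
    ∫ x, F x * e x = ∫ x in a..a + T, (∑' n : ℤ, F (x + T * n)) * e x := by
  rw [integral_eq_setIntegral_Ioc_tsum_comp_add_mul hFe hT a,
    intervalIntegral.integral_of_le (by linarith)]
  congr 1 with x
  rw [← tsum_mul_right]
  congr 1 with n
  rw [mul_comm T, he.int_mul n x]

end Folding

theorem intervalIntegral_zero_eq_smul_integral_comp_mul {E : Type*} [NormedAddCommGroup E]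
    [NormedSpace ℝ E] (f : ℝ → E) (h : ℝ) :
    ∫ t in (0 : ℝ)..h, f t = h • ∫ t in (0 : ℝ)..1, f (t * h) := by
  simp [intervalIntegral.smul_integral_comp_mul_right]

section Kernel

open Complex

theorem norm_exp_neg_I_mul_mul (ω t : ℝ) : ‖exp (-I * ω * t)‖ = 1 := by
  simp [norm_exp]

theorem norm_exp_I_mul_mul (ω t : ℝ) : ‖exp (I * ω * t)‖ = 1 := by
  simp [norm_exp]

theorem norm_H1fun_le (ω : ℝ) : ‖H1fun ω‖ ≤ 1 := by
  simpa [H1fun] using intervalIntegral.norm_integral_le_of_norm_le_const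
    (a := 0) (b := 1) fun t _ => (norm_exp_neg_I_mul_mul ω t).le

theorem continuous_H1fun : Continuous H1fun := by
  unfold H1fun; fun_prop

theorem integrable_H1fun_neg_mul_mul_H1fun {g : ℝ → ℂ} (hg : Integrable g) :
    Integrable fun x => H1fun (-x) * g x * H1fun x :=
  ((hg.bdd_mul (continuous_H1fun.comp continuous_neg).aestronglyMeasurable
    (.of_forall fun x => norm_H1fun_le (-x))).mul_bdd continuous_H1fun.aestronglyMeasurable
    (.of_forall norm_H1fun_le))

theorem intervalIntegral_integral_exp_mul_eq_integral_H1fun_mul {φ : ℝ → ℝ} {G : ℝ → ℂ}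
    (hφ : Measurable φ) (hG : Integrable G) :
    ∫ t in (0 : ℝ)..1, ∫ ω, exp (-I * φ ω * t) * G ω = ∫ ω, H1fun (φ ω) * G ω := by
  rw [intervalIntegral_integral_swap]
  · simp_rw [intervalIntegral.integral_mul_const, H1fun]
  · have : IsFiniteMeasure (volume.restrict (uIoc (0 : ℝ) 1)) :=
      isFiniteMeasure_restrict.2 measure_Ioc_lt_top.ne
    refine (hG.comp_snd _).bdd_mul (c := 1) ?_
      (.of_forall fun z => (norm_exp_neg_I_mul_mul _ _).le)
    fun_prop

theorem integrable_exp_I_mul_mul {g : ℝ → ℂ} (hg : Integrable g) (c : ℝ) :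
    Integrable fun ω : ℝ => exp (I * ω * c) * g ω :=
  hg.bdd_mul (by fun_prop) (.of_forall fun ω => (norm_exp_I_mul_mul ω c).le)

theorem intervalIntegral_unitSquare_inverseFourier {g : ℝ → ℂ} (hg : Integrable g) (c : ℝ) :
    ∫ t in (0 : ℝ)..1, ∫ s in (0 : ℝ)..1, ∫ ω : ℝ, exp (I * ω * ((c + t - s : ℝ) : ℂ)) * g ω =
      ∫ ω : ℝ, H1fun (-ω) * g ω * H1fun ω * exp (I * ω * c) := by
  have hsplit (t s ω : ℝ) : exp (I * ω * ((c + t - s : ℝ) : ℂ)) * g ω =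
      exp (-I * ω * s) * (exp (I * ω * t) * (exp (I * ω * c) * g ω)) := by
    rw [← mul_assoc, ← mul_assoc, ← Complex.exp_add, ← Complex.exp_add]
    push_cast
    ring_nf
  have hneg (t ω : ℝ) : exp (I * ω * t) = exp (-I * ((-ω : ℝ) : ℂ) * t) := by
    push_cast
    ring_nf
  calc ∫ t in (0 : ℝ)..1, ∫ s in (0 : ℝ)..1, ∫ ω : ℝ, exp (I * ω * ((c + t - s : ℝ) : ℂ)) * g ω
      = ∫ t in (0 : ℝ)..1, ∫ ω : ℝ, H1fun ω * (exp (I * ω * t) * (exp (I * ω * c) * g ω)) := by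
        simp_rw [hsplit]
        congr 1 with t
        exact intervalIntegral_integral_exp_mul_eq_integral_H1fun_mul measurable_id
          (integrable_exp_I_mul_mul (integrable_exp_I_mul_mul hg c) t)
    _ = ∫ t in (0 : ℝ)..1, ∫ ω : ℝ, exp (-I * ((-ω : ℝ) : ℂ) * t) *
          (H1fun ω * (exp (I * ω * c) * g ω)) := by
        congr 1 with t
        congr 1 with ω
        rw [hneg]
        ring
    _ = ∫ ω : ℝ, H1fun (-ω) * g ω * H1fun ω * exp (I * ω * c) := by
        rw [intervalIntegral_integral_exp_mul_eq_integral_H1fun_mul measurable_neg]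
        · congr 1 with ω
          ring
        · exact (integrable_exp_I_mul_mul hg c).bdd_mul continuous_H1fun.aestronglyMeasurable
            (.of_forall norm_H1fun_le)

theorem integral_comp_div_exp_I_mul_mul {g : ℝ → ℂ} {h : ℝ} (hh : 0 < h) (y : ℝ) :
    ∫ x : ℝ, exp (I * x * y) * g (x / h) =
      h * ∫ ω : ℝ, exp (I * ω * ((y * h : ℝ) : ℂ)) * g ω := by
  have hcongr (x : ℝ) : exp (I * x * y) * g (x / h) =
      exp (I * ((x / h : ℝ) : ℂ) * ((y * h : ℝ) : ℂ)) * g (x / h) := by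
    have : (h : ℂ) ≠ 0 := by exact_mod_cast hh.ne'
    congr 2
    push_cast
    field_simp
  simp_rw [hcongr]
  rw [Measure.integral_comp_div (fun ω => exp (I * ω * ((y * h : ℝ) : ℂ)) * g ω), abs_of_pos hh,
    Complex.real_smul]

theorem intervalIntegral_square_inverseFourier {g : ℝ → ℂ} (hg : Integrable g) {h : ℝ}
    (hh : 0 < h) (v : ℝ) :
    ∫ t in (0 : ℝ)..h, ∫ s in (0 : ℝ)..h, ∫ ω : ℝ, exp (I * ω * ((v * h + t - s : ℝ) : ℂ)) * g ω =
      h * ∫ x : ℝ, H1fun (-x) * g (x / h) * H1fun x * exp (I * x * v) := by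
  have hscale (t s : ℝ) : ∫ ω : ℝ, exp (I * ω * ((v * h + t * h - s * h : ℝ) : ℂ)) * g ω =
      (h : ℂ)⁻¹ * ∫ x : ℝ, exp (I * x * ((v + t - s : ℝ) : ℂ)) * g (x / h) := by
    rw [integral_comp_div_exp_I_mul_mul hh, inv_mul_cancel_left₀ (by exact_mod_cast hh.ne')]
    congr 1 with ω
    push_cast
    ring_nf
  rw [← intervalIntegral_unitSquare_inverseFourier (hg.comp_div hh.ne') v]
  simp_rw [intervalIntegral_zero_eq_smul_integral_comp_mul _ h, hscale,
    intervalIntegral.integral_smul, intervalIntegral.integral_const_mul]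
  rw [Complex.real_smul, Complex.real_smul, mul_inv_cancel_left₀ (by exact_mod_cast hh.ne')]

theorem periodic_exp_I_mul_intCast (u : ℤ) :
    Function.Periodic (fun x : ℝ => exp (I * x * u)) (2 * π) := fun x => by
  dsimp only
  rw [show I * ((x + 2 * π : ℝ) : ℂ) * u = I * x * u + u * (2 * π * I) by push_cast; ring,
    Complex.exp_add, exp_int_mul_two_pi_mul_I, mul_one]

end Kernel

theorem binned_covariance_folded_spectrum_general
    {d : ℕ} (q : ℝ → Matrix (Fin d) (Fin d) ℂ)
    (qhat : ℝ → Matrix (Fin d) (Fin d) ℂ)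
    (hqhat_int : ∀ i j, Integrable (fun ω => qhat ω i j) (volume : Measure ℝ))
    (hinv : ∀ (t : ℝ) (i j : Fin d),
      q t i j = ((1 / (2 * π) : ℝ) : ℂ) *
        ∫ ω : ℝ, Complex.exp (Complex.I * ω * t) * qhat ω i j)
    (h : ℝ) (hh : 0 < h) (u : ℤ) :
    (∀ᵐ ω ∂((volume : Measure ℝ).restrict (Set.Icc (-π) π)), ∀ i j : Fin d,
      Summable fun n : ℤ =>
        ‖H1fun (-(ω + 2 * π * n)) * qhat ((ω + 2 * π * n) / h) i j *
          H1fun (ω + 2 * π * n)‖) ∧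
    ∀ i j : Fin d,
      (∫ t in (0 : ℝ)..h, ∫ s in (0 : ℝ)..h, q ((u : ℝ) * h + t - s) i j) =
        ((h / (2 * π) : ℝ) : ℂ) *
          ∫ ω in (-π : ℝ)..π,
            (∑' n : ℤ, H1fun (-(ω + 2 * π * n)) * qhat ((ω + 2 * π * n) / h) i j *
              H1fun (ω + 2 * π * n)) * Complex.exp (Complex.I * ω * u) := by
  have hfolded (i j : Fin d) :=
    integrable_H1fun_neg_mul_mul_H1fun ((hqhat_int i j).comp_div hh.ne')
  have hπ : -π + 2 * π = π := by ring
  refine ⟨?_, fun i j => ?_⟩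
  · rw [← Measure.restrict_congr_set Ioc_ae_eq_Icc, ae_all_iff]
    refine fun i => ae_all_iff.2 fun j => ?_
    simpa only [hπ] using ae_summable_norm_comp_add_mul (hfolded i j) two_pi_pos (-π)
  · simp_rw [hinv, intervalIntegral.integral_const_mul]
    rw [intervalIntegral_square_inverseFourier (hqhat_int i j) hh]
    simp only [Complex.ofReal_intCast]
    have hintegrand := (hfolded i j).mul_bdd (c := 1)
      (g := fun x : ℝ => Complex.exp (Complex.I * x * u)) (by fun_prop)
      (.of_forall fun x => by simpa using (norm_exp_I_mul_mul x u).le)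
    rw [integral_mul_periodic_eq_intervalIntegral_tsum_mul hintegrand
      (periodic_exp_I_mul_intCast u) two_pi_pos (-π), hπ]
    push_cast
    ring

/-- **folded/aliased spectrum of binned covariances.** Let `q : ℝ → ℂ^{d×d}` be
continuous and (componentwise) integrable with integrable Fourier transform
`q̂(ω) = ∫ q(t) e^{−iωt} dt`, so that the inversion formula
`q(t) = (1/2π) ∫ q̂(ω) e^{iωt} dω` holds for all `t`. Then for every `h > 0` and `u ∈ ℤ`:
`∫_0^h ∫_0^h q(uh+t−s) dt ds
  = (h/2π) ∫_{−π}^{π} (∑_{n∈ℤ} H₁(−ω−2πn) q̂((ω+2πn)/h) H₁(ω+2πn)) e^{iωu} dω`,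
the series converging absolutely for almost every `ω ∈ [−π, π]`. -/
theorem binned_covariance_folded_spectrum
    {d : ℕ} (q : ℝ → Matrix (Fin d) (Fin d) ℂ)
    (hq_cont : ∀ i j, Continuous fun t => q t i j)
    (hq_int : ∀ i j, Integrable (fun t => q t i j) (volume : Measure ℝ))
    (qhat : ℝ → Matrix (Fin d) (Fin d) ℂ)
    (hqhat : ∀ (ω : ℝ) (i j : Fin d),
      qhat ω i j = ∫ t : ℝ, Complex.exp (-Complex.I * ω * t) * q t i j)
    (hqhat_int : ∀ i j, Integrable (fun ω => qhat ω i j) (volume : Measure ℝ))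
    (hinv : ∀ (t : ℝ) (i j : Fin d),
      q t i j = ((1 / (2 * π) : ℝ) : ℂ) *
        ∫ ω : ℝ, Complex.exp (Complex.I * ω * t) * qhat ω i j)
    (h : ℝ) (hh : 0 < h) (u : ℤ) :
    (∀ᵐ ω ∂((volume : Measure ℝ).restrict (Set.Icc (-π) π)), ∀ i j : Fin d,
      Summable fun n : ℤ =>
        ‖H1fun (-(ω + 2 * π * n)) * qhat ((ω + 2 * π * n) / h) i j *
          H1fun (ω + 2 * π * n)‖) ∧
    ∀ i j : Fin d,
      (∫ t in (0 : ℝ)..h, ∫ s in (0 : ℝ)..h, q ((u : ℝ) * h + t - s) i j) =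
        ((h / (2 * π) : ℝ) : ℂ) *
          ∫ ω in (-π : ℝ)..π,
            (∑' n : ℤ, H1fun (-(ω + 2 * π * n)) * qhat ((ω + 2 * π * n) / h) i j *
              H1fun (ω + 2 * π * n)) * Complex.exp (Complex.I * ω * u) :=
  binned_covariance_folded_spectrum_general q qhat hqhat_int hinv h hh u

end HawkesPaper
end
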